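/- arXiv:1402.5606 — 2 statements merged into one kernel-verified Lean document; each statement's English description precedes it below -/
import Mathlib

section
/- Let G be a group, P = L⋉U a subgroup with Levi L and normal subgroup U, and V a smooth admissible representation of P over a complete Noetherian local ring A. Suppose there exists an element z in the center of L and a compact open subgroup K_P = K_L·K_U of P fixing a given vector v such that z⁻ⁿK_P zⁿ ⊆ z⁻ᵐK_P zᵐ for n ≥ m and ⋃_{n≥0} zⁿ K_P z⁻ⁿ = K_L·U. Then U acts trivially on V. -/
open IsLocalRing Pointwise

/-! Fix `v`, killed by `𝔪^i` and fixed by `K_P`. Admissibility and the finiteness of the residue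
field make `V^{K_P}[𝔪^i]` a finite set. It is contained in `V^{z⁻ⁿK_Pzⁿ}[𝔪^i]`, which `ρ zⁿ` maps
bijectively onto it, so the two coincide. Hence `ρ z⁻ⁿ v` is fixed by `K_P`, i.e. `v` is fixed
by `zⁿK_Pz⁻ⁿ`, and these groups exhaust `U`. -/

lemma Module.finite_of_isTorsionBySet_pow_maximalIdeal {A M : Type*} [CommRing A]
    [IsNoetherianRing A] [IsLocalRing A] [Finite (ResidueField A)] [AddCommGroup M] [Module A M]
    [Module.Finite A M] {i : ℕ} (h : Module.IsTorsionBySet A M ↑((maximalIdeal A) ^ i)) :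
    Finite M := by
  let _ := h.module
  have : IsScalarTower A (A ⧸ (maximalIdeal A) ^ i) M := h.isScalarTower
  have : Finite (A ⧸ (maximalIdeal A) ^ i) := finite_quotient_iff.mpr ⟨i, le_rfl⟩
  have : Module.Finite (A ⧸ (maximalIdeal A) ^ i) M := .of_restrictScalars_finite A _ _
  exact Module.finite_of_finite (A ⧸ (maximalIdeal A) ^ i)

namespace Representation

variable {A G V : Type*} [CommRing A] [Group G] [AddCommGroup V] [Module A V]
  (ρ : Representation A G V)

/-- `V^H[I]`. -/
def fixedTorsion (H : Set G) (I : Ideal A) : Submodule A V where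
  carrier := {v | (∀ h ∈ H, ρ h v = v) ∧ ∀ a ∈ I, a • v = 0}
  add_mem' := by
    rintro v w ⟨hv, hv'⟩ ⟨hw, hw'⟩
    exact ⟨fun h hh => by rw [map_add, hv h hh, hw h hh],
      fun a ha => by rw [smul_add, hv' a ha, hw' a ha, add_zero]⟩
  zero_mem' := ⟨fun _ _ => map_zero _, fun a _ => smul_zero a⟩
  smul_mem' := by
    rintro c v ⟨hv, hv'⟩
    exact ⟨fun h hh => by rw [map_smul, hv h hh],
      fun a ha => by rw [smul_comm, hv' a ha, smul_zero]⟩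

variable {ρ} {H H' : Set G} {I : Ideal A}

lemma fixedTorsion_anti (hHH' : H ⊆ H') : ρ.fixedTorsion H' I ≤ ρ.fixedTorsion H I :=
  fun _ hv => ⟨fun h hh => hv.1 h (hHH' hh), hv.2⟩

lemma apply_mem_fixedTorsion_conj {v : V} (hv : v ∈ ρ.fixedTorsion H I) (g : G) :
    ρ g v ∈ ρ.fixedTorsion ((fun h => g * h * g⁻¹) '' H) I := by
  refine ⟨?_, fun a ha => by rw [← map_smul, hv.2 a ha, map_zero]⟩
  rintro _ ⟨h, hh, rfl⟩
  simp only [map_mul, Module.End.mul_apply, inv_self_apply, hv.1 h hh]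

lemma fixedTorsion_conj (H : Set G) (I : Ideal A) (g : G) :
    ρ.fixedTorsion ((fun h => g * h * g⁻¹) '' H) I = (ρ.fixedTorsion H I).map (ρ g) := by
  refine le_antisymm (fun v hv => ⟨ρ g⁻¹ v, ?_, self_inv_apply ρ g v⟩) ?_
  · rintro _ ⟨v, hv, rfl⟩
    exact apply_mem_fixedTorsion_conj hv g
  · simpa [Set.image_image, mul_assoc] using apply_mem_fixedTorsion_conj hv g⁻¹

lemma fixedTorsion_conj_eq_of_finite {g : G} (hsub : (fun h => g⁻¹ * h * g) '' H ⊆ H)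
    (hfin : Finite (ρ.fixedTorsion H I)) :
    ρ.fixedTorsion ((fun h => g⁻¹ * h * g) '' H) I = ρ.fixedTorsion H I := by
  have hfin' : (ρ.fixedTorsion H I : Set V).Finite := Set.toFinite _
  have hmap := fixedTorsion_conj (ρ := ρ) H I g⁻¹
  simp only [inv_inv] at hmap
  refine (SetLike.coe_injective ?_).symm
  refine Set.eq_of_subset_of_ncard_le (fixedTorsion_anti hsub) ?_ ?_
  · rw [hmap, Submodule.map_coe, Set.ncard_image_of_injective _ (apply_bijective ρ _).1]
  · rw [hmap, Submodule.map_coe]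
    exact hfin'.image _

lemma finite_fixedTorsion_of_le_span [IsNoetherianRing A] [IsLocalRing A]
    [Finite (ResidueField A)] {i : ℕ} {S : Set V} (hS : S.Finite)
    (hle : ρ.fixedTorsion H ((maximalIdeal A) ^ i) ≤ Submodule.span A S) :
    Finite (ρ.fixedTorsion H ((maximalIdeal A) ^ i)) := by
  have : Module.Finite A (ρ.fixedTorsion H ((maximalIdeal A) ^ i)) :=
    Module.Finite.iff_fg.mpr ((Submodule.fg_span hS).of_le hle)
  exact Module.finite_of_isTorsionBySet_pow_maximalIdeal
    fun v a => Subtype.ext (v.2.2 a.1 a.2)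

end Representation

open Representation

theorem stmt_0_general
    {G : Type*} [Group G] [TopologicalSpace G]
    (A : Type*) [CommRing A] [IsNoetherianRing A] [IsLocalRing A]
    [Finite (ResidueField A)]
    (V : Type*) [AddCommGroup V] [Module A V]
    (P L U : Subgroup G)
    (ρ : Representation A G V)
    -- `V` is a smooth representation of `P` :
    (hsmooth : ∀ v : V, ∃ (K : Subgroup G) (i : ℕ), K ≤ P ∧ IsOpen (K : Set G) ∧
      (∀ k ∈ K, ρ k v = v) ∧ ∀ a ∈ (maximalIdeal A) ^ i, a • v = 0)
    -- `V` is admissible : for every compact open `H ≤ P` and every `i`, the module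
    -- `V^H[𝔪^i]` is a finitely generated `A`-module
    (hadm : ∀ H : Subgroup G, H ≤ P → IsOpen (H : Set G) → IsCompact (H : Set G) →
      ∀ i : ℕ, ∃ S : Finset V, ∀ v : V,
        ((∀ h ∈ H, ρ h v = v) ∧ ∀ a ∈ (maximalIdeal A) ^ i, a • v = 0) →
          v ∈ Submodule.span A (S : Set V))
    -- the central element of `L` and the filtration of compact open subgroups :
    (hz : ∀ v : V, ∃ z : G, z ∈ L ∧ (∀ l ∈ L, z * l = l * z) ∧
      ∃ K_P K_L K_U : Subgroup G, K_P ≤ P ∧ K_L ≤ L ∧ K_U ≤ U ∧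
        IsOpen (K_P : Set G) ∧ IsCompact (K_P : Set G) ∧
        (K_P : Set G) = (K_L : Set G) * (K_U : Set G) ∧
        (∀ k ∈ K_P, ρ k v = v) ∧
        (∀ n m : ℕ, m ≤ n →
          (fun g => z⁻¹ ^ n * g * z ^ n) '' (K_P : Set G) ⊆
            (fun g => z⁻¹ ^ m * g * z ^ m) '' (K_P : Set G)) ∧
        (⋃ n : ℕ, (fun g => z ^ n * g * z⁻¹ ^ n) '' (K_P : Set G)) =
          (K_L : Set G) * (U : Set G)) :
    ∀ u ∈ U, ∀ v : V, ρ u v = v := by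
  intro u hu v
  obtain ⟨-, i, -, -, -, hkill⟩ := hsmooth v
  obtain ⟨z, -, -, K_P, K_L, -, hKP, -, -, hopen, hcpt, -, hfix, hchain, hunion⟩ := hz v
  obtain ⟨S, hS⟩ := hadm K_P hKP hopen hcpt i
  have hv : v ∈ ρ.fixedTorsion K_P ((maximalIdeal A) ^ i) := ⟨hfix, hkill⟩
  have hfin := finite_fixedTorsion_of_le_span S.finite_toSet fun w hw => hS w hw
  obtain ⟨n, k, hk, rfl⟩ : ∃ n, ∃ k ∈ K_P, z ^ n * k * (z ^ n)⁻¹ = u := by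
    have hu' : u ∈ (K_L : Set G) * U := ⟨1, K_L.one_mem, u, hu, one_mul u⟩
    simpa [← hunion, inv_pow] using hu'
  have hstable := fixedTorsion_conj_eq_of_finite (g := z ^ n)
    (by simpa [inv_pow] using hchain n 0 n.zero_le) hfin
  have hv' := apply_mem_fixedTorsion_conj hv (z ^ n)⁻¹
  simp only [inv_inv, hstable] at hv'
  rw [map_mul, map_mul, Module.End.mul_apply, Module.End.mul_apply, hv'.1 k hk,
    self_inv_apply]

/-- If `V` is a smooth admissible representation of a subgroup `P = L ⋉ U` of a topological
group `G` over a complete Noetherian local ring `A`, and for every vector there is a central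
element `z` of `L` and a compact open subgroup `K_P = K_L · K_U` fixing it, whose
`z`-conjugates form a decreasing chain with union `K_L · U`, then the unipotent radical `U`
acts trivially on `V`. -/
theorem stmt_0
    {G : Type*} [Group G] [TopologicalSpace G] [IsTopologicalGroup G]
    (A : Type*) [CommRing A] [IsNoetherianRing A] [IsLocalRing A]
    [Finite (ResidueField A)]
    (V : Type*) [AddCommGroup V] [Module A V]
    (P L U : Subgroup G) (hLP : L ≤ P) (hUP : U ≤ P)
    (hsemidirect : ∀ p ∈ P, ∃ l ∈ L, ∃ u ∈ U, p = l * u)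
    (hnormal : ∀ p ∈ P, ∀ u ∈ U, p * u * p⁻¹ ∈ U)
    (ρ : Representation A G V)
    -- `V` is a smooth representation of `P` :
    (hsmooth : ∀ v : V, ∃ (K : Subgroup G) (i : ℕ), K ≤ P ∧ IsOpen (K : Set G) ∧
      (∀ k ∈ K, ρ k v = v) ∧ ∀ a ∈ (maximalIdeal A) ^ i, a • v = 0)
    -- `V` is admissible : for every compact open `H ≤ P` and every `i`, the module
    -- `V^H[𝔪^i]` is a finitely generated `A`-module
    (hadm : ∀ H : Subgroup G, H ≤ P → IsOpen (H : Set G) → IsCompact (H : Set G) →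
      ∀ i : ℕ, ∃ S : Finset V, ∀ v : V,
        ((∀ h ∈ H, ρ h v = v) ∧ ∀ a ∈ (maximalIdeal A) ^ i, a • v = 0) →
          v ∈ Submodule.span A (S : Set V))
    -- the central element of `L` and the filtration of compact open subgroups :
    (hz : ∀ v : V, ∃ z : G, z ∈ L ∧ (∀ l ∈ L, z * l = l * z) ∧
      ∃ K_P K_L K_U : Subgroup G, K_P ≤ P ∧ K_L ≤ L ∧ K_U ≤ U ∧
        IsOpen (K_P : Set G) ∧ IsCompact (K_P : Set G) ∧
        (K_P : Set G) = (K_L : Set G) * (K_U : Set G) ∧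
        (∀ k ∈ K_P, ρ k v = v) ∧
        (∀ n m : ℕ, m ≤ n →
          (fun g => z⁻¹ ^ n * g * z ^ n) '' (K_P : Set G) ⊆
            (fun g => z⁻¹ ^ m * g * z ^ m) '' (K_P : Set G)) ∧
        (⋃ n : ℕ, (fun g => z ^ n * g * z⁻¹ ^ n) '' (K_P : Set G)) =
          (K_L : Set G) * (U : Set G)) :
    ∀ u ∈ U, ∀ v : V, ρ u v = v :=
  stmt_0_general A V P L U ρ hsmooth hadm hz
end

section
/- Let A be a ring, let R be an A-algebra, and suppose Ω¹_{(R/p)/(A/p)} = 0. Suppose further that for each n ≥ 1 there is an exact sequence 0 → R/p → R/pⁿ → R/p^{n−1} → 0 of A-modules compatible with multiplication (i.e. p is a nonzerodivisor on R/pⁿ in the relevant range). Then Ω¹_{(R/pⁿ)/(A/pⁿ)} = 0 for all n ≥ 1. -/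
open KaehlerDifferential TensorProduct


/-- If `Ω¹_{(R/p)/A} = 0` and for each `n ≥ 1` multiplication by `p^{n-1}` induces an
injection `R/p → R/pⁿ` (the exact sequences `0 → R/p → R/pⁿ → R/p^{n-1} → 0`), then
`Ω¹_{(R/pⁿ)/A} = 0` for all `n ≥ 1`.  (Since `A → A/pⁿ` is surjective, Kähler
differentials of `R/pⁿ` over `A/pⁿ` agree with those over `A`.) -/
theorem stmt_3 (p : ℕ) (hp : p.Prime) (A R : Type*) [CommRing A] [CommRing R] [Algebra A R]
    (h1 : Subsingleton (Ω[(R ⧸ Ideal.span {(p : R)})⁄A]))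
    (hexact : ∀ n : ℕ, 1 ≤ n → ∀ x : R,
      (p : R) ^ (n - 1) * x ∈ Ideal.span {(p : R) ^ n} → x ∈ Ideal.span {(p : R)}) :
    ∀ n : ℕ, 1 ≤ n → Subsingleton (Ω[(R ⧸ Ideal.span {(p : R) ^ n})⁄A]) := by
  intro n hn
  set I : Ideal R := Ideal.span {(p : R)} with hI
  -- the base change map for the quotient by `p` is injective
  have hzero : ∀ y, kerCotangentToTensor A R (R ⧸ I) y = 0 := by
    intro y
    obtain ⟨⟨x, hx⟩, rfl⟩ := Ideal.toCotangent_surjective _ y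
    rw [kerCotangentToTensor_toCotangent]
    have hx' : x ∈ I := by
      rwa [Ideal.Quotient.algebraMap_eq, RingHom.mem_ker, ← RingHom.mem_ker, Ideal.mk_ker] at hx
    obtain ⟨r, rfl⟩ := Ideal.mem_span_singleton'.mp hx'
    have hDp : (KaehlerDifferential.D A R) (p : R) = 0 := by
      have : ((p : ℕ) : R) = algebraMap A R (p : A) := by simp
      rw [this, Derivation.map_algebraMap]
    rw [Derivation.leibniz, hDp, smul_zero, zero_add, TensorProduct.tmul_smul,
      TensorProduct.smul_tmul']
    have : (p : R) • (1 : R ⧸ I) = 0 := by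
      rw [Algebra.smul_def, mul_one, Ideal.Quotient.algebraMap_eq, Ideal.Quotient.eq_zero_iff_mem]
      exact Ideal.mem_span_singleton_self _
    rw [this, TensorProduct.zero_tmul]
  have hinj : Function.Injective (mapBaseChange A R (R ⧸ I)) := by
    rw [← LinearMap.ker_eq_bot]
    have := range_kerCotangentToTensor A R (R ⧸ I) Ideal.Quotient.mk_surjective
    have hr : LinearMap.range (kerCotangentToTensor A R (R ⧸ I)) = ⊥ :=
      LinearMap.range_eq_bot.mpr (LinearMap.ext hzero)
    rw [hr] at this
    apply Submodule.restrictScalars_injective R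
    rw [← this, Submodule.restrictScalars_bot]
  have h2 : Subsingleton ((R ⧸ I) ⊗[R] Ω[R⁄A]) := hinj.subsingleton
  have h3 : I • (⊤ : Submodule R (Ω[R⁄A])) = ⊤ := by
    rw [← Submodule.Quotient.subsingleton_iff]
    exact (quotTensorEquivQuotSMul (Ω[R⁄A]) I).symm.injective.subsingleton
  have h4 : ∀ m : ℕ, (I ^ m) • (⊤ : Submodule R (Ω[R⁄A])) = ⊤ := by
    intro m
    induction m with
    | zero => simp
    | succ k ih =>
      rw [pow_succ, mul_comm, mul_smul, ih, h3]
  have hJ : Ideal.span {(p : R) ^ n} = I ^ n := (Ideal.span_singleton_pow _ _).symm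
  have h5 : Subsingleton ((R ⧸ Ideal.span {(p : R) ^ n}) ⊗[R] Ω[R⁄A]) := by
    have : Subsingleton ((Ω[R⁄A]) ⧸ (Ideal.span {(p : R) ^ n} • ⊤ : Submodule R (Ω[R⁄A]))) := by
      rw [hJ]
      exact Submodule.Quotient.subsingleton_iff.mpr (h4 n)
    exact (quotTensorEquivQuotSMul (Ω[R⁄A]) (Ideal.span {(p : R) ^ n})).injective.subsingleton
  exact (mapBaseChange_surjective A R (R ⧸ Ideal.span {(p : R) ^ n})
    Ideal.Quotient.mk_surjective).subsingleton
end
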